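/- arXiv:2106.05461 — 6 statements merged into one kernel-verified Lean document; each statement's English description precedes it below -/
import Mathlib

section
/- A group G (not necessarily finitely generated) satisfies the universal theory of a nonabelian free group if and only if G is locally fully residually free, i.e., every finitely generated subgroup of G is fully residually free. -/
open FirstOrder

/-- The first-order language of groups. -/
def grpLang : FirstOrder.Language :=
  ⟨fun n => match n with | 0 => Unit | 1 => Unit | 2 => Unit | _ => Empty,
   fun _ => Empty⟩

instance grpStructure (G : Type*) [Group G] : grpLang.Structure G where
  funMap {n} f v :=
    match n, f, v with
    | 0, _, _ => 1
    | 1, _, v => (v 0)⁻¹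
    | 2, _, v => v 0 * v 1
  RelMap {n} r _ := nomatch r

/-- A sentence is universal if it is a universally quantified quantifier-free formula. -/
def IsUniversalSentence (φ : grpLang.Sentence) : Prop :=
  ∃ (n : ℕ) (ψ : grpLang.BoundedFormula Empty n), ψ.IsQF ∧ φ = ψ.alls

/-- Fully residually free. -/
def FullyResiduallyFree (G : Type*) [Group G] : Prop :=
  ∀ S : Finset G, ∃ (α : Type) (f : G →* FreeGroup α), Set.InjOn f (S : Set G)

/-- Locally fully residually free: every finitely generated subgroup is fully
residually free. -/
def LocallyFullyResiduallyFree (G : Type*) [Group G] : Prop :=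
  ∀ H : Subgroup G, H.FG → FullyResiduallyFree H

/-!
A quantifier-free formula evaluated at a tuple only involves the finitely many values of its
terms, so it is preserved and reflected by every homomorphism injective on these values.

If every finitely generated subgroup of `G` is fully residually free, a universal sentence that
fails at a tuple of `G` therefore fails in some free group, and every free group maps into
`F(β)` injectively on any given finite set, because `F(ℕ)` embeds in `F(2)` by a ping-pong
argument in `GL₂(ℤ)`.

Conversely, let `H` be generated by `x₁, …, x_k` and let `S ⊆ H` be finite. Free groups embed
locally in `GL₂(ℤ)`, hence are equationally Noetherian by Hilbert's basis theorem: the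
relations of `H` among the `xᵢ` follow, in `F(β)`, from finitely many of them, `r₁, …, r_m`.
The universal sentence `∀ x, (⋀ⱼ rⱼ(x) = 1) → ⋁_{s ≠ t ∈ S} s(x) = t(x)` fails in `H`, hence
in `F(β)`, and a counterexample there is a homomorphism `H → F(β)` injective on `S`.
-/

open Pointwise

theorem FreeGroup.injective_lift_conj_zpow_of_ping_pong {G : Type} {α : Type*} [Group G]
    [MulAction G α] (a b : G) (X Y Z : Set α) (hX : X.Nonempty) (hXY : Disjoint X Y)
    (hXZ : X ⊆ Z) (hYZ : Y ⊆ Z) (hZ : ∀ n : ℤ, n ≠ 0 → Disjoint Z (b ^ n • Z))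
    (ha : a • Yᶜ ⊆ X) (ha' : a⁻¹ • Xᶜ ⊆ Y) :
    Function.Injective (FreeGroup.lift fun i : ℤ => b ^ i * a * b ^ (-i)) := by
  have hZ' (i j : ℤ) (hij : i ≠ j) : Disjoint (b ^ i • Z) (b ^ j • Z) := by
    rw [show b ^ j = b ^ i * b ^ (j - i) by rw [← zpow_add, add_sub_cancel], mul_smul,
      Set.disjoint_smul_set]
    exact hZ _ (sub_ne_zero.mpr hij.symm)
  have hconj (i : ℤ) (c : G) (s : Set α) :
      (b ^ i * c * b ^ (-i)) • (b ^ i • s)ᶜ = b ^ i • c • sᶜ := by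
    rw [← Set.smul_set_compl, mul_smul, mul_smul, zpow_neg, inv_smul_smul]
  refine FreeGroup.injective_lift_of_ping_pong _ (fun i : ℤ => b ^ i • X) (fun i : ℤ => b ^ i • Y)
    (fun i => hX.smul_set) (fun i j hij => (hZ' i j hij).mono (Set.smul_set_mono hXZ)
      (Set.smul_set_mono hXZ)) (fun i j hij => (hZ' i j hij).mono (Set.smul_set_mono hYZ)
      (Set.smul_set_mono hYZ)) (fun i j => ?_) (fun i => ?_) (fun i => ?_)
  · rcases eq_or_ne i j with rfl | hij
    · exact Set.disjoint_smul_set.mpr hXY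
    · exact (hZ' i j hij).mono (Set.smul_set_mono hXZ) (Set.smul_set_mono hYZ)
  · simpa only [hconj] using Set.smul_set_mono ha
  · have : (b ^ i * a * b ^ (-i))⁻¹ = b ^ i * a⁻¹ * b ^ (-i) := by group
    simpa only [Pi.inv_apply, this, hconj] using Set.smul_set_mono ha'

noncomputable def shearUpper : GL (Fin 2) ℤ :=
  Matrix.GeneralLinearGroup.mk'' !![1, 2; 0, 1] (by simp [Matrix.det_fin_two])

noncomputable def shearLower : GL (Fin 2) ℤ :=
  Matrix.GeneralLinearGroup.mk'' !![1, 0; 2, 1] (by simp [Matrix.det_fin_two])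

noncomputable def shearConj (i : ℤ) : GL (Fin 2) ℤ :=
  shearLower ^ i * shearUpper * shearLower ^ (-i)

theorem coe_shearLower_zpow (n : ℤ) :
    ((shearLower ^ n : GL (Fin 2) ℤ) : Matrix (Fin 2) (Fin 2) ℤ) = !![1, 0; 2 * n, 1] := by
  induction n using Int.induction_on with
  | zero => simp [Matrix.one_fin_two]
  | succ n ih =>
    rw [zpow_add_one, Units.val_mul, ih]
    simp [shearLower]; ring
  | pred n ih =>
    rw [zpow_sub_one, Units.val_mul, ih]
    simp [shearLower, Matrix.inv_def]; ring

theorem shearUpper_smul (v : Fin 2 → ℤ) : shearUpper • v = ![v 0 + 2 * v 1, v 1] := by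
  simp [shearUpper, Matrix.GeneralLinearGroup.fin_two_smul]

theorem shearUpper_inv_smul (v : Fin 2 → ℤ) : shearUpper⁻¹ • v = ![v 0 - 2 * v 1, v 1] := by
  simp [shearUpper, Matrix.GeneralLinearGroup.fin_two_smul, Matrix.inv_def, sub_eq_add_neg]

theorem shearLower_zpow_smul (n : ℤ) (v : Fin 2 → ℤ) :
    shearLower ^ n • v = ![v 0, 2 * n * v 0 + v 1] := by
  rw [Matrix.GeneralLinearGroup.fin_two_smul, coe_shearLower_zpow]
  simp

/- The slope of `v` is `v 1 / v 0`; `shearLower` adds `2` to it and `shearUpper` maps `t` to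
`t / (1 + 2 t)`. The sets below are slope intervals, with the inequalities multiplied by
`v 0 ^ 2`. -/

def slopeIooZeroOne : Set {v : Fin 2 → ℤ // v ≠ 0} :=
  {v | 0 < v.1 0 * v.1 1 ∧ v.1 0 * v.1 1 < v.1 0 ^ 2}

def slopeIccNegOneZero : Set {v : Fin 2 → ℤ // v ≠ 0} :=
  {v | v.1 0 ≠ 0 ∧ -v.1 0 ^ 2 ≤ v.1 0 * v.1 1 ∧ v.1 0 * v.1 1 ≤ 0}

def slopeIcoNegOneOne : Set {v : Fin 2 → ℤ // v ≠ 0} :=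
  {v | v.1 0 ≠ 0 ∧ -v.1 0 ^ 2 ≤ v.1 0 * v.1 1 ∧ v.1 0 * v.1 1 < v.1 0 ^ 2}

theorem shearUpper_smul_compl_subset : shearUpper • slopeIccNegOneZeroᶜ ⊆ slopeIooZeroOne := by
  rintro _ ⟨⟨v, hv⟩, h, rfl⟩
  simp only [slopeIooZeroOne, slopeIccNegOneZero, Set.mem_compl_iff, Set.mem_ofPred_eq,
    Units.smul_coe, shearUpper_smul, Matrix.cons_val_zero, Matrix.cons_val_one,
    Matrix.cons_val_fin_one] at h ⊢
  by_cases hx : v 0 = 0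
  · have hy : 0 < v 1 ^ 2 := by
      have : v 1 ≠ 0 := fun hy => hv (by ext i; fin_cases i <;> simp [hx, hy])
      positivity
    rw [hx]
    constructor <;> nlinarith
  · have : 0 < v 0 ^ 2 := by positivity
    have h' : v 0 * v 1 < -v 0 ^ 2 ∨ 0 < v 0 * v 1 := by
      by_contra! hc
      exact h ⟨hx, hc.1, hc.2⟩
    rcases h' with h' | h' <;> constructor <;> nlinarith

theorem shearUpper_inv_smul_compl_subset :
    shearUpper⁻¹ • slopeIooZeroOneᶜ ⊆ slopeIccNegOneZero := by
  rintro _ ⟨⟨v, hv⟩, h, rfl⟩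
  simp only [slopeIooZeroOne, slopeIccNegOneZero, Set.mem_compl_iff, Set.mem_ofPred_eq,
    Units.smul_coe, shearUpper_inv_smul, Matrix.cons_val_zero, Matrix.cons_val_one,
    Matrix.cons_val_fin_one] at h ⊢
  refine ⟨fun h0 => ?_, ?_⟩
  · have hy : 0 < v 1 ^ 2 := by
      have : v 1 ≠ 0 := fun hy => hv (by ext i; fin_cases i <;> simp [hy]; linarith)
      positivity
    rw [show v 0 = 2 * v 1 by linarith] at h
    exact h ⟨by nlinarith, by nlinarith⟩
  · have h' : v 0 * v 1 ≤ 0 ∨ v 0 ^ 2 ≤ v 0 * v 1 := by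
      by_contra! hc
      exact h ⟨hc.1, hc.2⟩
    rcases h' with h' | h' <;> constructor <;> nlinarith [sq_nonneg (v 0 - v 1), sq_nonneg (v 1)]

theorem disjoint_slopeIcoNegOneOne_shearLower_zpow_smul {n : ℤ} (hn : n ≠ 0) :
    Disjoint slopeIcoNegOneOne (shearLower ^ n • slopeIcoNegOneOne) := by
  rw [Set.disjoint_left]
  rintro ⟨v, hv⟩ ⟨hx, h₁, h₂⟩ h
  rw [Set.mem_smul_set_iff_inv_smul_mem, ← zpow_neg] at h
  obtain ⟨-, h₃, h₄⟩ := h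
  simp only [Units.smul_coe, shearLower_zpow_smul, Matrix.cons_val_zero, Matrix.cons_val_one,
    Matrix.cons_val_fin_one] at hx h₁ h₂ h₃ h₄
  have : 0 < v 0 ^ 2 := by positivity
  have : n < 1 := by nlinarith
  have : -1 < n := by nlinarith
  omega

theorem injective_lift_shearConj : Function.Injective (FreeGroup.lift shearConj) := by
  refine FreeGroup.injective_lift_conj_zpow_of_ping_pong shearUpper shearLower slopeIooZeroOne
    slopeIccNegOneZero slopeIcoNegOneOne ⟨⟨![2, 1], by simp⟩, by simp [slopeIooZeroOne]⟩ ?_ ?_ ?_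
    (fun _ => disjoint_slopeIcoNegOneOne_shearLower_zpow_smul) shearUpper_smul_compl_subset
    shearUpper_inv_smul_compl_subset
  · rw [Set.disjoint_left]
    rintro v ⟨h₁, -⟩ ⟨-, -, h₂⟩
    omega
  · rintro v ⟨h₁, h₂⟩
    exact ⟨by rintro h; simp [h] at h₁, by nlinarith, h₂⟩
  · exact fun v ⟨hx, h₁, h₂⟩ => ⟨hx, h₁, h₂.trans_lt (by positivity)⟩

namespace FreeGroup

open Subgroup

variable {α : Type*}

theorem exists_finset_subset_closure_image_of (S : Finset (FreeGroup α)) :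
    ∃ s : Finset α, (S : Set (FreeGroup α)) ⊆ closure (of '' (s : Set α)) := by
  classical
  have hmono {s t : Finset α} (h : s ⊆ t) : closure (of '' (s : Set α)) ≤ closure (of '' t) :=
    closure_mono (Set.image_mono (Finset.coe_subset.mpr h))
  have (x : FreeGroup α) : ∃ s : Finset α, x ∈ closure (of '' (s : Set α)) := by
    induction x with
    | C1 => exact ⟨∅, one_mem _⟩
    | of a => exact ⟨{a}, subset_closure (by simp)⟩
    | inv_of a _ => exact ⟨{a}, inv_mem (subset_closure (by simp))⟩
    | mul x y hx hy =>
      obtain ⟨s, hs⟩ := hx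
      obtain ⟨t, ht⟩ := hy
      exact ⟨s ∪ t, mul_mem (hmono Finset.subset_union_left hs)
        (hmono Finset.subset_union_right ht)⟩
  choose s hs using this
  exact ⟨S.biUnion s, fun x hx => hmono (Finset.subset_biUnion_of_mem s hx) (hs x)⟩

def retract (s : Set α) [DecidablePred (· ∈ s)] : FreeGroup α →* FreeGroup s :=
  lift fun a => if h : a ∈ s then of ⟨a, h⟩ else 1

theorem map_val_retract {s : Set α} [DecidablePred (· ∈ s)] {x : FreeGroup α}
    (hx : x ∈ closure (of '' s)) : map Subtype.val (retract s x) = x := by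
  have : closure (of '' s) ≤ ((map Subtype.val).comp (retract s)).eqLocus (.id _) :=
    closure_le _ |>.mpr <| by
      rintro _ ⟨a, ha, rfl⟩
      show map Subtype.val (retract s (of a)) = of a
      simp [retract, ha]
  exact this hx

theorem injOn_retract (s : Set α) [DecidablePred (· ∈ s)] :
    Set.InjOn (retract s) (closure (of '' s)) := fun x hx y hy h => by
  rw [← map_val_retract hx, h, map_val_retract hy]

theorem exists_injOn_closure_of_injective {G : Type*} [Group G] {j : FreeGroup ℕ →* G}
    (hj : Function.Injective j) (S : Finset (FreeGroup α)) :
    ∃ f : FreeGroup α →* G, Set.InjOn f (closure (S : Set (FreeGroup α))) := by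
  classical
  obtain ⟨s, hs⟩ := exists_finset_subset_closure_image_of S
  obtain ⟨e, he⟩ := exists_injective_nat s
  exact ⟨j.comp ((map e).comp (retract (s : Set α))),
    ((hj.comp (map_injective he)).comp_injOn (injOn_retract _)).mono
      (SetLike.coe_subset_coe.mpr ((closure_le _).mpr hs))⟩

def conjByPowers : FreeGroup ℤ →* FreeGroup Bool :=
  lift fun i => of true ^ i * of false * of true ^ (-i)

theorem conjByPowers_injective : Function.Injective conjByPowers := by
  have : (lift fun b => cond b shearLower shearUpper).comp conjByPowers = lift shearConj :=
    ext_hom _ _ fun i => by simp [conjByPowers, shearConj]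
  exact .of_comp (f := lift fun b => cond b shearLower shearUpper)
    (by rw [← MonoidHom.coe_comp, this]; exact injective_lift_shearConj)

theorem exists_injective_hom_freeGroup_nat (β : Type*) [Nontrivial β] :
    ∃ j : FreeGroup ℕ →* FreeGroup β, Function.Injective j := by
  obtain ⟨b₁, b₂, hb⟩ := exists_pair_ne β
  have hb : Function.Injective fun b => cond b b₁ b₂ := by
    intro b b' h
    cases b <;> cases b' <;> simp_all [eq_comm]
  refine ⟨(map fun b => cond b b₁ b₂).comp (conjByPowers.comp (map Nat.cast)), ?_⟩
  simp only [MonoidHom.coe_comp]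
  exact (map_injective hb).comp (conjByPowers_injective.comp (map_injective Nat.cast_injective))

end FreeGroup

theorem fullyResiduallyFree_iff_forall_exists_injOn (β : Type) [Nontrivial β] (H : Type*)
    [Group H] :
    FullyResiduallyFree H ↔ ∀ S : Finset H, ∃ f : H →* FreeGroup β, Set.InjOn f S := by
  refine ⟨fun hH S => ?_, fun hH S => ⟨β, hH S⟩⟩
  classical
  obtain ⟨α, f, hf⟩ := hH S
  obtain ⟨j, hj⟩ := FreeGroup.exists_injective_hom_freeGroup_nat β
  obtain ⟨g, hg⟩ := FreeGroup.exists_injOn_closure_of_injective hj (S.image f)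
  exact ⟨g.comp f,
    (hg.mono Subgroup.subset_closure).comp hf fun x hx => by simpa using ⟨x, hx, rfl⟩⟩

def IsEquationallyNoetherian (G : Type*) [Group G] : Prop :=
  ∀ (k : ℕ) (W : Set (FreeGroup (Fin k))), ∃ W₀ : Finset (FreeGroup (Fin k)), ↑W₀ ⊆ W ∧
    ∀ x : Fin k → G, (∀ r ∈ W₀, FreeGroup.lift x r = 1) → ∀ w ∈ W, FreeGroup.lift x w = 1

namespace Matrix.GeneralLinearGroup

open MvPolynomial

variable {n R : Type*} [Fintype n] [DecidableEq n] [CommRing R] {k : ℕ}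

/-- The matrix of indeterminates standing for the generator `p.1` if `p.2`, for its inverse
otherwise. -/
noncomputable def genericMatrix (p : Fin k × Bool) :
    Matrix n n (MvPolynomial ((Fin k × Bool) × n × n) R) :=
  of fun a c => X (p, a, c)

noncomputable def wordMatrix (w : FreeGroup (Fin k)) :
    Matrix n n (MvPolynomial ((Fin k × Bool) × n × n) R) :=
  (w.toWord.map genericMatrix).prod

noncomputable def evalLetters (g : Fin k → GL n R) :
    MvPolynomial ((Fin k × Bool) × n × n) R →+* R :=
  eval fun e => ((cond e.1.2 (g e.1.1) (g e.1.1)⁻¹ : GL n R) : Matrix n n R) e.2.1 e.2.2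

theorem mapMatrix_evalLetters_wordMatrix (g : Fin k → GL n R) (w : FreeGroup (Fin k)) :
    (evalLetters g).mapMatrix (wordMatrix w) = (FreeGroup.lift g w : Matrix n n R) := by
  conv_rhs => rw [← FreeGroup.mk_toWord (x := w), FreeGroup.lift_mk]
  rw [wordMatrix, map_list_prod, ← Units.coeHom_apply, map_list_prod, List.map_map, List.map_map]
  congr 1
  refine List.map_congr_left fun p _ => ?_
  ext a c
  simp [evalLetters, genericMatrix]

theorem evalLetters_wordMatrix_sub_one_apply (g : Fin k → GL n R) (w : FreeGroup (Fin k))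
    (a c : n) :
    evalLetters g ((wordMatrix w - 1) a c) = ((FreeGroup.lift g w : Matrix n n R) - 1) a c := by
  rw [← mapMatrix_evalLetters_wordMatrix, ← map_one (evalLetters g).mapMatrix, ← map_sub]
  rfl

/- The solutions of `W` are the zeros of the entries of `wordMatrix w - 1`, `w ∈ W`; by Hilbert's
basis theorem finitely many of these entries generate the same ideal. -/
theorem isEquationallyNoetherian [IsNoetherianRing R] : IsEquationallyNoetherian (GL n R) := by
  classical
  intro k W
  let entry (e : FreeGroup (Fin k) × n × n) : MvPolynomial ((Fin k × Bool) × n × n) R :=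
    (wordMatrix e.1 - 1) e.2.1 e.2.2
  obtain ⟨T, hTW, hspan⟩ := (Submodule.fg_span_iff_fg_span_finset_subset _).mp
    (IsNoetherian.noetherian (Ideal.span (entry '' (Prod.fst ⁻¹' W))))
  obtain ⟨E, hEW, rfl⟩ := Finset.subset_set_image_iff.mp hTW
  refine ⟨E.image Prod.fst, ?_, fun g hg w hw => ?_⟩
  · simpa using Set.image_subset_iff.mpr hEW
  have hker : Ideal.span (entry '' (Prod.fst ⁻¹' W)) ≤ RingHom.ker (evalLetters g) := by
    rw [Ideal.span, hspan, Finset.coe_image]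
    refine Ideal.span_le.mpr ?_
    rintro _ ⟨e, he, rfl⟩
    rw [SetLike.mem_coe, RingHom.mem_ker, evalLetters_wordMatrix_sub_one_apply,
      hg e.1 (Finset.mem_image_of_mem _ he), Units.val_one, sub_self, Matrix.zero_apply]
  ext a c
  have := hker (Ideal.subset_span ⟨(w, a, c), hw, rfl⟩)
  rwa [RingHom.mem_ker, evalLetters_wordMatrix_sub_one_apply, Matrix.sub_apply, sub_eq_zero] at this

end Matrix.GeneralLinearGroup

theorem IsEquationallyNoetherian.of_forall_exists_injOn_closure {H G : Type*} [Group H] [Group G]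
    (hG : IsEquationallyNoetherian G)
    (hHG : ∀ S : Finset H, ∃ f : H →* G, Set.InjOn f (Subgroup.closure (S : Set H))) :
    IsEquationallyNoetherian H := by
  classical
  intro k W
  obtain ⟨W₀, hW₀W, hW₀⟩ := hG k W
  refine ⟨W₀, hW₀W, fun x hx w hw => ?_⟩
  obtain ⟨f, hf⟩ := hHG (Finset.univ.image x)
  have hlift (u : FreeGroup (Fin k)) : f (FreeGroup.lift x u) = FreeGroup.lift (f ∘ x) u :=
    FreeGroup.lift_unique (f.comp (FreeGroup.lift x)) (by simp)
  have hmem (u : FreeGroup (Fin k)) :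
      FreeGroup.lift x u ∈ Subgroup.closure (Finset.univ.image x : Set H) := by
    rw [Finset.coe_image, Finset.coe_univ, Set.image_univ, ← FreeGroup.range_lift_eq_closure]
    exact ⟨u, rfl⟩
  refine hf (hmem w) (one_mem _) ?_
  rw [hlift, map_one]
  exact hW₀ _ (fun r hr => by rw [← hlift, hx r hr, map_one]) w hw

theorem FreeGroup.isEquationallyNoetherian (α : Type*) : IsEquationallyNoetherian (FreeGroup α) :=
  Matrix.GeneralLinearGroup.isEquationallyNoetherian.of_forall_exists_injOn_closure
    (FreeGroup.exists_injOn_closure_of_injective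
      (j := (FreeGroup.lift shearConj).comp (FreeGroup.map Nat.cast))
      (by simpa using injective_lift_shearConj.comp (FreeGroup.map_injective Nat.cast_injective)))

namespace FirstOrder.Language.BoundedFormula

variable {L : Language} {α β : Type*} {n : ℕ}

theorem IsQF.iInf [Finite β] {f : β → L.BoundedFormula α n} (h : ∀ b, (f b).IsQF) :
    (iInf f).IsQF := by
  let _ := Fintype.ofFinite β
  suffices ∀ l : List β, (l.map f).foldr (· ⊓ ·) ⊤ |>.IsQF from this _
  intro l
  induction l with
  | nil => exact IsQF.top
  | cons b l ih => exact (h b).inf ih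

theorem IsQF.iSup [Finite β] {f : β → L.BoundedFormula α n} (h : ∀ b, (f b).IsQF) :
    (iSup f).IsQF := by
  let _ := Fintype.ofFinite β
  suffices ∀ l : List β, (l.map f).foldr (· ⊔ ·) ⊥ |>.IsQF from this _
  intro l
  induction l with
  | nil => exact isQF_bot
  | cons b l ih => exact (h b).sup ih

end FirstOrder.Language.BoundedFormula

namespace grpLang

open Language BoundedFormula

variable {α ι M N : Type*} [Group M] [Group N]

def oneTerm : grpLang.Term α := Term.func (l := 0) () ![]

def invTerm (t : grpLang.Term α) : grpLang.Term α := Term.func (l := 1) () ![t]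

def mulTerm (t₁ t₂ : grpLang.Term α) : grpLang.Term α := Term.func (l := 2) () ![t₁, t₂]

@[simp] theorem realize_invTerm (v : α → M) (t : grpLang.Term α) :
    (invTerm t).realize v = (t.realize v)⁻¹ := rfl

@[simp] theorem realize_mulTerm (v : α → M) (t₁ t₂ : grpLang.Term α) :
    (mulTerm t₁ t₂).realize v = t₁.realize v * t₂.realize v := rfl

theorem realize_comp_monoidHom (f : M →* N) (v : α → M) (t : grpLang.Term α) :
    t.realize (f ∘ v) = f (t.realize v) := by
  induction t with
  | var a => rfl
  | @func l F ts ih =>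
    match l, F with
    | 0, _ => exact (map_one f).symm
    | 1, _ => exact (congrArg Inv.inv (ih 0)).trans (map_inv f _).symm
    | 2, _ => exact (congrArg₂ (· * ·) (ih 0) (ih 1)).trans (map_mul f _ _).symm

def wordTerm [DecidableEq ι] (w : FreeGroup ι) : grpLang.Term ι :=
  (w.toWord.map fun p => cond p.2 (Term.var p.1) (invTerm (Term.var p.1))).foldr mulTerm oneTerm

theorem realize_wordTerm [DecidableEq ι] (v : ι → M) (w : FreeGroup ι) :
    (wordTerm w).realize v = FreeGroup.lift v w := by
  conv_rhs => rw [← FreeGroup.mk_toWord (x := w), FreeGroup.lift_mk]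
  rw [wordTerm]
  induction w.toWord with
  | nil => rfl
  | cons p L ih => obtain ⟨a, _ | _⟩ := p <;> simp [ih]

def wordEq {k : ℕ} (u w : FreeGroup (Fin k)) : grpLang.BoundedFormula α k :=
  ((wordTerm u).relabel Sum.inr).bdEqual ((wordTerm w).relabel Sum.inr)

theorem isQF_wordEq {k : ℕ} (u w : FreeGroup (Fin k)) :
    (wordEq u w : grpLang.BoundedFormula α k).IsQF :=
  (IsAtomic.equal _ _).isQF

theorem realize_wordEq {k : ℕ} (u w : FreeGroup (Fin k)) (v : α → M) (xs : Fin k → M) :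
    (wordEq u w).Realize v xs ↔ FreeGroup.lift xs u = FreeGroup.lift xs w := by
  simp only [wordEq, realize_bdEqual, Term.realize_relabel, Sum.elim_comp_inr, realize_wordTerm]

end grpLang

namespace FirstOrder.Language.BoundedFormula

variable {α M N : Type*} [Group M] [Group N] {n : ℕ}

theorem IsQF.exists_finset_realize_comp_iff {ψ : grpLang.BoundedFormula α n} (hψ : ψ.IsQF)
    (v : α → M) (xs : Fin n → M) :
    ∃ S : Finset M, ∀ (N : Type*) [Group N] (f : M →* N), Set.InjOn f S →
      (ψ.Realize (f ∘ v) (f ∘ xs) ↔ ψ.Realize v xs) := by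
  classical
  induction hψ with
  | falsum => exact ⟨∅, fun _ _ _ _ => Iff.rfl⟩
  | of_isAtomic h =>
    obtain ⟨t₁, t₂⟩ | ⟨R, _⟩ := h
    · refine ⟨{t₁.realize (Sum.elim v xs), t₂.realize (Sum.elim v xs)}, fun N _ f hf => ?_⟩
      simp only [realize_bdEqual, ← Sum.comp_elim, grpLang.realize_comp_monoidHom]
      exact hf.eq_iff (by simp) (by simp)
    · exact R.elim
  | imp _ _ ih₁ ih₂ =>
    obtain ⟨S₁, hS₁⟩ := ih₁
    obtain ⟨S₂, hS₂⟩ := ih₂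
    refine ⟨S₁ ∪ S₂, fun N _ f hf => ?_⟩
    simp only [realize_imp, hS₁ N f (hf.mono (by simp)), hS₂ N f (hf.mono (by simp))]

theorem IsQF.realize_comp_iff_of_injective {ψ : grpLang.BoundedFormula α n} (hψ : ψ.IsQF)
    {f : M →* N} (hf : Function.Injective f) (v : α → M) (xs : Fin n → M) :
    ψ.Realize (f ∘ v) (f ∘ xs) ↔ ψ.Realize v xs :=
  let ⟨_, hS⟩ := hψ.exists_finset_realize_comp_iff v xs
  hS N f hf.injOn

end FirstOrder.Language.BoundedFormula

open Language BoundedFormula grpLang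

theorem IsUniversalSentence.realize_of_injective {M N : Type*} [Group M] [Group N]
    {φ : grpLang.Sentence} (hφ : IsUniversalSentence φ) {f : M →* N}
    (hf : Function.Injective f) (h : N ⊨ φ) : M ⊨ φ := by
  obtain ⟨n, ψ, hψ, rfl⟩ := hφ
  refine realize_alls.mpr fun xs => ?_
  rw [← hψ.realize_comp_iff_of_injective hf, Subsingleton.elim (f ∘ default) default]
  exact realize_alls.mp h _

theorem IsUniversalSentence.realize_of_forall_fg_exists_injOn {G F : Type*} [Group G] [Group F]
    (hG : ∀ H : Subgroup G, H.FG → ∀ S : Finset H, ∃ f : H →* F, Set.InjOn f S)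
    {φ : grpLang.Sentence} (hφ : IsUniversalSentence φ) (hF : F ⊨ φ) : G ⊨ φ := by
  classical
  obtain ⟨n, ψ, hψ, rfl⟩ := hφ
  refine realize_alls.mpr fun xs => ?_
  let H := Subgroup.closure (Set.range xs)
  let ys : Fin n → H := fun i => ⟨xs i, Subgroup.subset_closure ⟨i, rfl⟩⟩
  have hH : H.FG := ⟨Finset.univ.image xs, by simp [H]⟩
  obtain ⟨S, hS⟩ := hψ.exists_finset_realize_comp_iff default ys
  obtain ⟨f, hf⟩ := hG H hH S
  have hys : ψ.Realize default ys := by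
    rw [← hS F f hf, Subsingleton.elim (f ∘ default) default]
    exact realize_alls.mp hF _
  rwa [← hψ.realize_comp_iff_of_injective H.subtype_injective,
    Subsingleton.elim (H.subtype ∘ default) default] at hys

theorem Group.FG.exists_freeGroup_fin_hom_surjective {H : Type*} [Group H] (hH : Group.FG H) :
    ∃ (k : ℕ) (π : FreeGroup (Fin k) →* H), Function.Surjective π := by
  obtain ⟨α, _, π, hπ⟩ := Group.fg_iff_exists_freeGroup_hom_surjective_finite.mp hH
  obtain ⟨k, ⟨e⟩⟩ := Finite.exists_equiv_fin α
  exact ⟨k, π.comp (FreeGroup.freeGroupCongr e.symm).toMonoidHom,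
    hπ.comp (FreeGroup.freeGroupCongr e.symm).surjective⟩

theorem exists_injOn_of_forall_universal_realize {H F : Type*} [Group H] [Group F]
    (hH : Group.FG H) (hF : IsEquationallyNoetherian F)
    (hHF : ∀ φ : grpLang.Sentence, IsUniversalSentence φ → F ⊨ φ → H ⊨ φ) (S : Finset H) :
    ∃ f : H →* F, Set.InjOn f S := by
  classical
  obtain ⟨k, π, hπ⟩ := hH.exists_freeGroup_fin_hom_surjective
  obtain ⟨W₀, hW₀, hW⟩ := hF k π.ker
  let c := Function.surjInv hπ
  have hc : ∀ h, π (c h) = h := Function.surjInv_eq hπ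
  let ψ : grpLang.BoundedFormula Empty k :=
    (iInf fun r : W₀ => wordEq r.1 1).imp
      (iSup fun p : {p : S × S // p.1 ≠ p.2} => wordEq (c p.1.1) (c p.1.2))
  have hψ : ψ.IsQF := (IsQF.iInf fun _ => isQF_wordEq _ _).imp (IsQF.iSup fun _ => isQF_wordEq _ _)
  have hHψ : ¬ H ⊨ ψ.alls := by
    intro h
    have hlift : FreeGroup.lift (π ∘ FreeGroup.of) = π := FreeGroup.ext_hom _ _ (by simp)
    have := realize_alls.mp h (π ∘ FreeGroup.of)
    simp only [ψ, realize_imp, realize_iInf, realize_iSup, realize_wordEq, hlift] at this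
    obtain ⟨⟨⟨s, t⟩, hst⟩, heq⟩ := this fun r => by rw [map_one]; exact hW₀ r.2
    rw [hc, hc] at heq
    exact hst (Subtype.ext heq)
  obtain ⟨y, hy⟩ : ∃ y : Fin k → F, ¬ ψ.Realize default y := by
    by_contra! h
    exact hHψ (hHF _ ⟨k, ψ, hψ, rfl⟩ (realize_alls.mpr h))
  simp only [ψ, realize_imp, realize_iInf, realize_iSup, realize_wordEq, Classical.not_imp] at hy
  obtain ⟨hyW₀, hyS⟩ := hy
  have hker : π.ker ≤ (FreeGroup.lift y).ker := fun w hw =>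
    hW y (fun r hr => by simpa using hyW₀ ⟨r, hr⟩) w hw
  let f := π.liftOfSurjective hπ ⟨_, hker⟩
  have hf (u : FreeGroup (Fin k)) : f (π u) = FreeGroup.lift y u :=
    π.liftOfRightInverse_comp_apply _ _ _ u
  refine ⟨f, fun s hs t ht hst => by_contra fun hne => hyS ⟨⟨(⟨s, hs⟩, ⟨t, ht⟩), ?_⟩, ?_⟩⟩
  · exact fun h => hne (congrArg Subtype.val h)
  · rw [← hf, ← hf, hc, hc]
    exact hst

/-- A group satisfies the universal theory of a nonabelian free group if and only
if it is locally fully residually free. -/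
theorem universalTheory_iff_locallyFullyResiduallyFree
    (G : Type) [Group G] (β : Type) [Nontrivial β] :
    (∀ φ : grpLang.Sentence, IsUniversalSentence φ →
        FreeGroup β ⊨ φ → G ⊨ φ) ↔ LocallyFullyResiduallyFree G := by
  simp only [LocallyFullyResiduallyFree, fullyResiduallyFree_iff_forall_exists_injOn β]
  refine ⟨fun hG H hH => ?_, fun hG φ hφ => hφ.realize_of_forall_fg_exists_injOn hG⟩
  refine exists_injOn_of_forall_universal_realize ((Group.fg_iff_subgroup_fg H).mpr hH)
    (FreeGroup.isEquationallyNoetherian β) fun φ hφ hF => ?_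
  exact hφ.realize_of_injective H.subtype_injective (hG φ hφ hF)
end

section
/- Every limit group (finitely generated fully residually free group) embeds into SL₂(R*) for some ultrapower R* of the real field; in particular, every limit group admits a nontrivial 2-dimensional linear representation over some field. -/
open Matrix Filter Function Set
open scoped Pointwise MatrixGroups

theorem smul_compl_subset_conj {G α : Type*} [Group G] [MulAction G α] {a g : G}
    {X Y : Set α} (h : a • Yᶜ ⊆ X) : (g * a * g⁻¹) • (g • Y)ᶜ ⊆ g • X := by
  rw [← Set.smul_set_compl, mul_smul, mul_smul, inv_smul_smul]
  exact Set.smul_set_mono h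

-- Ping-pong is played on nonzero vectors: `0` is fixed by the whole group.
def nonzeroVectors (G V : Type*) [Group G] [AddMonoid V] [DistribMulAction G V] :
    SubMulAction G V where
  carrier := {v | v ≠ 0}
  smul_mem' g _ hv := (smul_ne_zero_iff_ne g).2 hv

section Sanov

local notation "ℝ²₀" => nonzeroVectors SL(2, ℝ) (Fin 2 → ℝ)

lemma SL2_smul_eq (g : SL(2, ℝ)) (v : Fin 2 → ℝ) :
    g • v = ![g 0 0 * v 0 + g 0 1 * v 1, g 1 0 * v 0 + g 1 1 * v 1] := by
  rw [Matrix.SpecialLinearGroup.smul_def, smul_eq_mulVec, mulVec_fin_two]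

def shear (t : ℝ) : SL(2, ℝ) := SpecialLinearGroup.transvection zero_ne_one t

-- `(x, y) ↦ (x, y - 5 x)`; any factor above `4` moves the complement of `narrowConePos` into
-- `narrowConeNonpos`.
def parabolic : SL(2, ℝ) := SpecialLinearGroup.transvection one_ne_zero (-5)

def sanovGenerator (n : ℕ) : SL(2, ℝ) := shear n * parabolic * (shear n)⁻¹

def narrowCone : Set ℝ²₀ := {v | 2 * |v.1 0| < |v.1 1|}

def narrowConeNonpos : Set ℝ²₀ := {v ∈ narrowCone | v.1 0 * v.1 1 ≤ 0}

def narrowConePos : Set ℝ²₀ := {v ∈ narrowCone | 0 < v.1 0 * v.1 1}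

lemma shear_smul (t : ℝ) (v : Fin 2 → ℝ) : shear t • v = ![v 0 + t * v 1, v 1] := by
  simp [SL2_smul_eq, shear, SpecialLinearGroup.transvection_coe]

lemma parabolic_smul (v : Fin 2 → ℝ) : parabolic • v = ![v 0, v 1 - 5 * v 0] := by
  simp [SL2_smul_eq, parabolic, SpecialLinearGroup.transvection_coe]
  ring

lemma parabolic_inv_smul (v : Fin 2 → ℝ) : parabolic⁻¹ • v = ![v 0, v 1 + 5 * v 0] := by
  simp [SL2_smul_eq, parabolic, SpecialLinearGroup.transvection_inv,
    SpecialLinearGroup.transvection_coe]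
  ring

lemma fst_ne_zero_or_snd_ne_zero (v : ℝ²₀) : v.1 0 ≠ 0 ∨ v.1 1 ≠ 0 := by
  by_contra! h
  exact v.2 (funext fun i => by fin_cases i <;> simp [h])

lemma parabolic_smul_compl_narrowConePos : parabolic • narrowConePosᶜ ⊆ narrowConeNonpos := by
  rintro _ ⟨v, hv, rfl⟩
  simp only [narrowConePos, narrowCone, mem_compl_iff, mem_ofPred_eq, not_and, not_lt] at hv
  suffices 2 * |v.1 0| < |v.1 1 - 5 * v.1 0| ∧ v.1 0 * (v.1 1 - 5 * v.1 0) ≤ 0 by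
    simpa [narrowConeNonpos, narrowCone, parabolic_smul] using this
  set x := v.1 0; set y := v.1 1
  rcases le_or_gt (x * y) 0 with hxy | hxy
  · refine ⟨?_, by nlinarith [sq_nonneg x]⟩
    have : 0 < |x| + |y| := by rcases fst_ne_zero_or_snd_ne_zero v with h0 | h0 <;> positivity
    cases abs_cases x <;> cases abs_cases y <;> cases abs_cases (y - 5 * x) <;> nlinarith
  · -- here `|y - 5 x| ≥ 5 |x| - |y| ≥ 3 |x|`
    have hy : |y| ≤ 2 * |x| := not_lt.1 fun h' => (hv h').not_gt hxy
    have : 0 < |x| := abs_pos.2 (left_ne_zero_of_mul hxy.ne')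
    cases abs_cases x <;> cases abs_cases y <;> cases abs_cases (y - 5 * x) <;>
      constructor <;> nlinarith

lemma parabolic_inv_smul_compl_narrowConeNonpos :
    parabolic⁻¹ • narrowConeNonposᶜ ⊆ narrowConePos := by
  rintro _ ⟨v, hv, rfl⟩
  simp only [narrowConeNonpos, narrowCone, mem_compl_iff, mem_ofPred_eq, not_and, not_le] at hv
  suffices 2 * |v.1 0| < |v.1 1 + 5 * v.1 0| ∧ 0 < v.1 0 * (v.1 1 + 5 * v.1 0) by
    simpa [narrowConePos, narrowCone, parabolic_inv_smul] using this
  set x := v.1 0; set y := v.1 1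
  -- the line `x = 0` fixed by `parabolic` lies in `narrowConeNonpos`
  have hx : 0 < |x| := by
    refine abs_pos.2 fun hx => ?_
    have hy : y ≠ 0 := (fst_ne_zero_or_snd_ne_zero v).resolve_left (not_not.2 hx)
    simpa [hx] using hv (by simpa [hx] using hy)
  rcases lt_or_ge 0 (x * y) with hxy | hxy
  · cases abs_cases x <;> cases abs_cases y <;> cases abs_cases (y + 5 * x) <;>
      constructor <;> nlinarith
  · have hy : |y| ≤ 2 * |x| := not_lt.1 fun h' => (hv h').not_ge hxy
    cases abs_cases x <;> cases abs_cases y <;> cases abs_cases (y + 5 * x) <;>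
      constructor <;> nlinarith

lemma disjoint_shear_smul_narrowCone {s t : ℝ} (hst : 1 ≤ |s - t|) :
    Disjoint (shear s • narrowCone) (shear t • narrowCone) := by
  rw [Set.disjoint_left]
  rintro _ ⟨v, hv, rfl⟩ ⟨w, hw, hvw⟩
  have h0 := congrFun (congrArg Subtype.val hvw) 0
  have h1 := congrFun (congrArg Subtype.val hvw) 1
  simp only [SubMulAction.val_smul, shear_smul, Matrix.cons_val_zero, Matrix.cons_val_one]
    at h0 h1
  simp only [narrowCone, mem_ofPred_eq] at hv hw
  rw [h1] at hw h0
  have : |s - t| * |v.1 1| < 1 * |v.1 1| := by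
    rw [← abs_mul]
    calc |(s - t) * v.1 1| = |w.1 0 - v.1 0| := by congr 1; linarith
      _ ≤ |w.1 0| + |v.1 0| := abs_sub _ _
      _ < 1 * |v.1 1| := by linarith
  nlinarith [abs_nonneg (v.1 1)]

lemma one_le_abs_natCast_sub {n m : ℕ} (h : n ≠ m) : (1 : ℝ) ≤ |(n : ℝ) - m| := by
  exact_mod_cast Int.one_le_abs (sub_ne_zero.2 (Nat.cast_injective.ne h))

lemma injective_lift_sanovGenerator : Injective (FreeGroup.lift sanovGenerator) := by
  have hnonpos : narrowConeNonpos ⊆ narrowCone := fun _ h => h.1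
  have hpos : narrowConePos ⊆ narrowCone := fun _ h => h.1
  have hcones {n m : ℕ} (h : n ≠ m) {A B : Set ℝ²₀} (hA : A ⊆ narrowCone)
      (hB : B ⊆ narrowCone) :
      Disjoint (shear n • A) (shear m • B) :=
    (disjoint_shear_smul_narrowCone (one_le_abs_natCast_sub h)).mono
      (smul_set_mono hA) (smul_set_mono hB)
  refine FreeGroup.injective_lift_of_ping_pong sanovGenerator
    (fun n => shear n • narrowConeNonpos) (fun n => shear n • narrowConePos)
    (fun n => ?_) (fun n m h => hcones h hnonpos hnonpos) (fun n m h => hcones h hpos hpos)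
    (fun n m => ?_) (fun n => smul_compl_subset_conj parabolic_smul_compl_narrowConePos)
    (fun n => ?_)
  · refine Set.Nonempty.smul_set ⟨⟨![0, 1], fun h => by simpa using congrFun h 1⟩, ?_⟩
    simp [narrowConeNonpos, narrowCone]
  · rcases eq_or_ne n m with rfl | h
    · exact disjoint_smul_set.2 (Set.disjoint_left.2 fun v h h' => h.2.not_gt h'.2)
    · exact hcones h hnonpos hpos
  · have := smul_compl_subset_conj (g := shear n) parabolic_inv_smul_compl_narrowConeNonpos
    simpa [sanovGenerator, mul_assoc] using this

end Sanov

namespace Matrix.SpecialLinearGroup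

variable {n R I : Type*} [Fintype n] [DecidableEq n] [CommRing R]

def ofPi : (I → SpecialLinearGroup n R) →* SpecialLinearGroup n (I → R) where
  toFun g := ⟨of fun i j T => g T i j, funext fun T => by
    simpa using ((Pi.evalRingHom (fun _ => R) T).map_det (of fun i j T => g T i j)).trans
      (g T).det_coe⟩
  map_one' := by ext i j T; by_cases h : i = j <;> simp [one_apply, h]
  map_mul' g h := by
    ext i j T
    change _ = ((of fun i j T => g T i j) * (of fun i j T => h T i j)) i j T
    simp [mul_apply, Finset.sum_apply]

lemma eventually_eq_one_of_map_ofPi_eq_one {U : Filter I} {g : I → SpecialLinearGroup n R}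
    (h : map (Germ.coeRingHom U) (ofPi g) = 1) : ∀ᶠ T in U, g T = 1 := by
  have h' : map (Germ.coeRingHom U) (ofPi g) = map (Germ.coeRingHom U) (ofPi 1) := by
    rw [h, map_one, map_one]
  have hentry (i j : n) : ∀ᶠ T in U, g T i j = (1 : SpecialLinearGroup n R) i j :=
    Germ.coe_eq.1 (congrArg (fun A : SpecialLinearGroup n (Germ U R) => A i j) h')
  filter_upwards [eventually_all.2 fun i => eventually_all.2 (hentry i)] with T hT
  exact ext _ _ hT

end Matrix.SpecialLinearGroup

theorem exists_injective_SL2_of_isFreeGroup (G : Type*) [Group G] [IsFreeGroup G] [Countable G] :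
    ∃ f : G →* SL(2, ℝ), Injective f := by
  have : Countable (IsFreeGroup.Generators G) :=
    ((IsFreeGroup.toFreeGroup G).symm.injective.comp FreeGroup.of_injective).countable
  obtain ⟨e, he⟩ := Countable.exists_injective_nat (IsFreeGroup.Generators G)
  exact ⟨(FreeGroup.lift sanovGenerator).comp
      ((FreeGroup.map e).comp (IsFreeGroup.toFreeGroup G).toMonoidHom),
    injective_lift_sanovGenerator.comp
      ((FreeGroup.map_injective he).comp (IsFreeGroup.toFreeGroup G).injective)⟩

theorem FullyResiduallyFree.exists_SL2_injOn {L : Type*} [Group L] [Countable L]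
    (hL : FullyResiduallyFree L) (S : Finset L) : ∃ g : L →* SL(2, ℝ), InjOn g S := by
  obtain ⟨α, f, hf⟩ := hL S
  have : Countable f.range := f.rangeRestrict_surjective.countable
  obtain ⟨ψ, hψ⟩ := exists_injective_SL2_of_isFreeGroup f.range
  exact ⟨ψ.comp f.rangeRestrict,
    fun x hx y hy hxy => hf hx hy (congrArg Subtype.val (hψ hxy))⟩

theorem exists_injective_SL_ultrapower_of_forall_injOn {L : Type} [Group L] {n R : Type*}
    [Fintype n] [DecidableEq n] [CommRing R]
    (h : ∀ S : Finset L, ∃ g : L →* SpecialLinearGroup n R, InjOn g S) :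
    ∃ (I : Type) (U : Ultrafilter I) (f : L →* SpecialLinearGroup n (Germ (U : Filter I) R)),
      Injective f := by
  classical
  choose g hg using h
  let U : Ultrafilter (Finset L) := .of atTop
  refine ⟨Finset L, U, (SpecialLinearGroup.map (Germ.coeRingHom (U : Filter (Finset L)))).comp
    (SpecialLinearGroup.ofPi.comp (MonoidHom.pi g)),
    (injective_iff_map_eq_one _).2 fun x hx => ?_⟩
  have hker : ∀ᶠ S in (U : Filter (Finset L)), g S x = 1 :=
    SpecialLinearGroup.eventually_eq_one_of_map_ofPi_eq_one hx
  have hmem : ∀ᶠ S in (U : Filter (Finset L)), {x, 1} ≤ S :=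
    Ultrafilter.of_le atTop (eventually_ge_atTop _)
  obtain ⟨S, hS, hxS⟩ := (hker.and hmem).exists
  exact hg S (hxS (by simp)) (hxS (by simp)) (by rw [hS, map_one])

theorem Group.FG.countable {G : Type*} [Group G] (h : Group.FG G) : Countable G := by
  obtain ⟨α, _, φ, hφ⟩ := Group.fg_iff_exists_freeGroup_hom_surjective_finite.1 h
  exact hφ.countable

/-- Every limit group (finitely generated fully residually free group) embeds
into `SL₂(ℝ*)` for some ultrapower `ℝ*` of the real field; in particular it
admits a faithful (hence nontrivial, when the group is nontrivial)
2-dimensional linear representation over some field. -/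
theorem limitGroup_embeds_SL2_ultrapower
    (L : Type) [Group L] (hfg : Group.FG L) (hL : FullyResiduallyFree L) :
    (∃ (I : Type) (U : Ultrafilter I)
        (f : L →* Matrix.SpecialLinearGroup (Fin 2) (Filter.Germ (U : Filter I) ℝ)),
        Function.Injective f) ∧
    (∃ (K : Type) (_ : Field K) (ρ : L →* Matrix.GeneralLinearGroup (Fin 2) K),
        Function.Injective ρ) := by
  have := hfg.countable
  obtain ⟨I, U, f, hf⟩ := exists_injective_SL_ultrapower_of_forall_injOn hL.exists_SL2_injOn
  exact ⟨⟨I, U, f, hf⟩, Germ (U : Filter I) ℝ, inferInstance,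
    SpecialLinearGroup.toGL.comp f, SpecialLinearGroup.toGL_injective.comp hf⟩
end

section
/- (Sanov) The subgroup of SL₂(ℤ) generated by the matrices [[1,2],[0,1]] and [[1,0],[2,1]] is a free group of rank 2. -/
/-!
Both generators are transvections, `[[1,2],[0,1]]^n = [[1,2n],[0,1]]` and
`[[1,0],[2,1]]^n = [[1,0],[2n,1]]`. For `n ≠ 0` the first maps `{(x, y) : |x| < |y|}` into
`{(x, y) : |y| < |x|}`, because `|x + 2ny| ≥ 2|y| - |x| > |y|`, and the second maps
`{|y| < |x|}` into `{|x| < |y|}` in the same way. The ping-pong lemma for the free product of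
the two infinite cyclic groups they generate then shows that no nonempty reduced word is trivial.
-/

def sanovA : Matrix.SpecialLinearGroup (Fin 2) ℤ :=
  ⟨!![1, 2; 0, 1], by norm_num [Matrix.det_fin_two_of]⟩

def sanovB : Matrix.SpecialLinearGroup (Fin 2) ℤ :=
  ⟨!![1, 0; 2, 1], by norm_num [Matrix.det_fin_two_of]⟩

open scoped Pointwise Function

theorem FreeGroup.injective_lift_of_ping_pong_zpow {ι G α : Type*} [Nontrivial ι] [Group G]
    [MulAction G α] (a : ι → G) (X : ι → Set α) (hXnonempty : ∀ i, (X i).Nonempty)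
    (hXdisj : Pairwise (Disjoint on X))
    (hpp : Pairwise fun i j => ∀ n : ℤ, n ≠ 0 → a i ^ n • X j ⊆ X i) :
    Function.Injective (FreeGroup.lift a) := by
  have hlift : FreeGroup.lift a =
      (Monoid.CoprodI.lift fun i => FreeGroup.lift fun _ : Unit => a i).comp
        (freeGroupEquivCoprodI : FreeGroup ι ≃* _).toMonoidHom := by
    ext i; simp
  rw [hlift, MonoidHom.coe_comp]
  refine .comp ?_ freeGroupEquivCoprodI.injective
  have hcard : 3 ≤ Cardinal.mk (FreeGroup Unit) := by
    rw [FreeGroup.freeGroupUnitEquivInt.cardinal_eq, Cardinal.mk_int]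
    exact Cardinal.natCast_le_aleph0
  refine Monoid.CoprodI.lift_injective_of_ping_pong _ (.inr ⟨Classical.arbitrary ι, hcard⟩) X
    hXnonempty hXdisj fun i j hij h hh => ?_
  obtain ⟨n, rfl⟩ := FreeGroup.freeGroupUnitEquivInt.symm.surjective h
  have hn : n ≠ 0 := by rintro rfl; exact hh (zpow_zero _)
  simpa [FreeGroup.freeGroupUnitEquivInt] using hpp hij n hn

lemma abs_lt_abs_add_mul {R : Type*} [CommRing R] [LinearOrder R] [IsStrictOrderedRing R]
    {x y c : R} (hxy : |x| < |y|) (hc : 2 ≤ |c|) : |y| < |x + c * y| :=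
  calc |y| < 2 * |y| - |x| := by linarith
    _ ≤ |c| * |y| - |x| := by gcongr
    _ = |c * y| - |-x| := by rw [abs_mul, abs_neg]
    _ ≤ |x + c * y| := by simpa [add_comm] using abs_sub_abs_le_abs_sub (c * y) (-x)

namespace Matrix.SpecialLinearGroup

variable {ι R : Type*} [Fintype ι] [DecidableEq ι] [CommRing R] {i j : ι}

lemma transvection_zpow (hij : i ≠ j) (c : R) (n : ℤ) :
    transvection hij c ^ n = transvection hij (n • c) := by
  let φ : Multiplicative R →* SpecialLinearGroup ι R :=
    { toFun x := transvection hij x.toAdd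
      map_one' := transvection_coeff_zero hij
      map_mul' x y := transvection_add hij x.toAdd y.toAdd }
  exact (map_zpow φ (.ofAdd c) n).symm

lemma transvection_smul (hij : i ≠ j) (c : R) (v : ι → R) :
    transvection hij c • v = v + Pi.single i (c * v j) := by
  simp [SpecialLinearGroup.smul_def, transvection_coe, add_mulVec, single_mulVec, Pi.single]

variable [LinearOrder R] [IsStrictOrderedRing R]

lemma abs_lt_abs_transvection_zpow_smul (hij : i ≠ j) {c : R} (hc : 2 ≤ |c|) {n : ℤ}
    (hn : n ≠ 0) {v : ι → R} (hv : |v i| < |v j|) :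
    |(transvection hij c ^ n • v) j| < |(transvection hij c ^ n • v) i| := by
  have hnc : 2 ≤ |n • c| := by
    rw [zsmul_eq_mul, abs_mul, ← Int.cast_abs]
    exact hc.trans (le_mul_of_one_le_left (abs_nonneg c) (mod_cast Int.one_le_abs hn))
  simpa [transvection_zpow, transvection_smul, hij.symm] using abs_lt_abs_add_mul hv hnc

theorem injective_lift_transvection_of_two_le_abs {b c : R} (hb : 2 ≤ |b|) (hc : 2 ≤ |c|) :
    Function.Injective (FreeGroup.lift fun k : Bool =>
      if k then transvection (zero_ne_one' (Fin 2)) b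
      else transvection (one_ne_zero' (Fin 2)) c) := by
  refine FreeGroup.injective_lift_of_ping_pong_zpow _
    (fun k : Bool => if k then {v : Fin 2 → R | |v 1| < |v 0|} else {v | |v 0| < |v 1|})
    ?_ ?_ ?_
  · rintro (_ | _)
    · exact ⟨![0, 1], by simp⟩
    · exact ⟨![1, 0], by simp⟩
  · rintro (_ | _) (_ | _) hkl <;> simp only [ne_eq, not_true_eq_false] at hkl
    all_goals exact Set.disjoint_left.2 fun v h h' => lt_asymm h h'
  · rintro (_ | _) (_ | _) hkl n hn <;> simp only [ne_eq, not_true_eq_false] at hkl <;>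
      rintro _ ⟨v, hv, rfl⟩
    · exact abs_lt_abs_transvection_zpow_smul (one_ne_zero' (Fin 2)) hc hn hv
    · exact abs_lt_abs_transvection_zpow_smul (zero_ne_one' (Fin 2)) hb hn hv

end Matrix.SpecialLinearGroup

/-- Sanov's theorem: the subgroup of `SL₂(ℤ)` generated by `[[1,2],[0,1]]` and
`[[1,0],[2,1]]` is free of rank 2, i.e. the canonical map from the free group on
two generators sending the generators to these matrices is injective. -/
theorem sanov_free :
    Function.Injective
      (FreeGroup.lift (fun b : Bool => if b then sanovA else sanovB)) := by
  have hA : sanovA = .transvection (zero_ne_one' (Fin 2)) 2 := by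
    ext i j; fin_cases i <;> fin_cases j <;> rfl
  have hB : sanovB = .transvection (one_ne_zero' (Fin 2)) 2 := by
    ext i j; fin_cases i <;> fin_cases j <;> rfl
  rw [hA, hB]
  exact Matrix.SpecialLinearGroup.injective_lift_transvection_of_two_le_abs
    (by norm_num) (by norm_num)
end

section
/- Let Γ = ⟨X | R⟩ be a group presentation in which every defining relator has length exactly ℓ and which satisfies the C'(1/8) small cancellation condition. If R = [u, c, v̄, d] is the boundary cycle of a cell occurring in a geodesic digon or semidigon in the Cayley graph of Γ, where u and v are the subpaths of the cell lying on the two geodesic sides and c, d are the connecting subpaths (each of length strictly less than ℓ/8), then |u| > ℓ/4 and |v| > ℓ/4. -/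
/-- A word `w` (element of the free group) is geodesic with respect to the
quotient map `π` if it has minimal free-group length among all words with the
same image. -/
def IsGeodesicWord {α : Type} [DecidableEq α] {Γ : Type*} [Group Γ]
    (π : FreeGroup α →* Γ) (w : FreeGroup α) : Prop :=
  ∀ w' : FreeGroup α, π w' = π w → w.norm ≤ w'.norm

/-- The `C'(1/8)` small cancellation condition for a set of relators of common
length `ℓ`: any common subword (piece) of two distinct relators has length
strictly less than `ℓ/8`. -/
def SmallCancellationC8 {α : Type} [DecidableEq α]
    (R : Set (FreeGroup α)) (ℓ : ℕ) : Prop :=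
  ∀ r₁ ∈ R, ∀ r₂ ∈ R, r₁ ≠ r₂ →
    ∀ p : List (α × Bool), p <:+: r₁.toWord → p <:+: r₂.toWord →
      (p.length : ℝ) < (ℓ : ℝ) / 8

/-- Lemma 5.9: in a presentation in which all defining relators have length
exactly `ℓ` and which satisfies `C'(1/8)`, if `u·c·v⁻¹·d` is the boundary cycle
of a cell of a digon or semidigon, with `u`, `v` geodesic subpaths and `c`, `d`
connecting subpaths of length `< ℓ/8`, then `|u| > ℓ/4` and `|v| > ℓ/4`. -/
theorem cell_sides_long {α : Type} [DecidableEq α]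
    (R : Set (FreeGroup α)) (ℓ : ℕ) (hℓ : 0 < ℓ)
    (hlen : ∀ r ∈ R, r.norm = ℓ)
    (hsc : SmallCancellationC8 R ℓ)
    (u c v d : FreeGroup α)
    (hrel : u * c * v⁻¹ * d ∈ R)
    (hsum : u.norm + c.norm + v.norm + d.norm = ℓ)
    (hc : (c.norm : ℝ) < (ℓ : ℝ) / 8)
    (hd : (d.norm : ℝ) < (ℓ : ℝ) / 8)
    (hu : IsGeodesicWord (PresentedGroup.mk R) u)
    (hv : IsGeodesicWord (PresentedGroup.mk R) v) :
    (ℓ : ℝ) / 4 < (u.norm : ℝ) ∧ (ℓ : ℝ) / 4 < (v.norm : ℝ) := by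
  set π := PresentedGroup.mk R
  have hr1 : π (u * c * v⁻¹ * d) = 1 := by
    have : u * c * v⁻¹ * d ∈ Subgroup.normalClosure R :=
      Subgroup.subset_normalClosure hrel
    exact (QuotientGroup.eq_one_iff _).2 this
  have hπ : π u * π c * (π v)⁻¹ * π d = 1 := by
    simpa [map_mul, map_inv] using hr1
  have e3 : π u = (π d)⁻¹ * π v * (π c)⁻¹ :=
    eq_mul_inv_iff_mul_eq.mpr (mul_inv_eq_iff_eq_mul.mp (mul_eq_one_iff_eq_inv.mp hπ))
  have h1 : π (d⁻¹ * v * c⁻¹) = π u := by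
    simp only [map_mul, map_inv]; rw [e3]
  have h2 : π (d * u * c) = π v := by
    simp only [map_mul]; rw [e3]; group
  have hu' : u.norm ≤ d.norm + v.norm + c.norm := by
    have := hu _ h1
    calc u.norm ≤ (d⁻¹ * v * c⁻¹).norm := this
      _ ≤ (d⁻¹ * v).norm + c⁻¹.norm := FreeGroup.norm_mul_le _ _
      _ ≤ d⁻¹.norm + v.norm + c⁻¹.norm :=
          Nat.add_le_add_right (FreeGroup.norm_mul_le _ _) _
      _ = d.norm + v.norm + c.norm := by rw [FreeGroup.norm_inv_eq, FreeGroup.norm_inv_eq]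
  have hv' : v.norm ≤ d.norm + u.norm + c.norm := by
    calc v.norm ≤ (d * u * c).norm := hv _ h2
      _ ≤ (d * u).norm + c.norm := FreeGroup.norm_mul_le _ _
      _ ≤ d.norm + u.norm + c.norm :=
          Nat.add_le_add_right (FreeGroup.norm_mul_le _ _) _
  have hsumR : (u.norm : ℝ) + c.norm + v.norm + d.norm = ℓ := by
    exact_mod_cast congrArg (Nat.cast : ℕ → ℝ) hsum
  have huR : (u.norm : ℝ) ≤ d.norm + v.norm + c.norm := by exact_mod_cast hu'
  have hvR : (v.norm : ℝ) ≤ d.norm + u.norm + c.norm := by exact_mod_cast hv'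
  constructor <;> linarith
end

section
/- A commutative transitive group in which the centralizer of every nontrivial element is self-normalizing is CSA: every maximal abelian subgroup M is malnormal, i.e., M ∩ g M g⁻¹ ≠ {1} implies g ∈ M. -/
/-!
If `y ≠ 1` and `g y g⁻¹` both lie in a maximal abelian subgroup `M`, commutative transitivity
makes `M` the centralizer of each of them. Conjugation by `g` carries `C(y)` onto `C(g y g⁻¹)`,
so `g` normalizes `C(y) = M`, and self-normalization puts `g` in `M`.
-/

open Subgroup

def IsCommTransitive (G : Type*) [Group G] : Prop :=
  ∀ a b c : G, a * b = b * a → b * c = c * b → b ≠ 1 → a * c = c * a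

section

variable {G : Type*} [Group G]

theorem IsCommTransitive.centralizer_singleton_commute (hct : IsCommTransitive G) {x : G}
    (hx : x ≠ 1) : ∀ a ∈ centralizer {x}, ∀ b ∈ centralizer {x}, a * b = b * a := by
  intro a ha b hb
  rw [mem_centralizer_singleton_iff] at ha hb
  exact hct a x b ha hb.symm hx

theorem IsCommTransitive.centralizer_singleton_eq_of_maximal (hct : IsCommTransitive G)
    {M : Subgroup G} (hM : ∀ a ∈ M, ∀ b ∈ M, a * b = b * a)
    (hmax : ∀ N : Subgroup G, (∀ a ∈ N, ∀ b ∈ N, a * b = b * a) → M ≤ N → N = M)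
    {x : G} (hx : x ≠ 1) (hxM : x ∈ M) : centralizer {x} = M :=
  hmax _ (hct.centralizer_singleton_commute hx) fun m hm =>
    mem_centralizer_singleton_iff.mpr (hM x hxM m hm).symm

theorem conj_mem_centralizer_conj_iff {g h y : G} :
    g * h * g⁻¹ ∈ centralizer {g * y * g⁻¹} ↔ h ∈ centralizer {y} := by
  simp only [mem_centralizer_singleton_iff, ← MulAut.conj_apply, ← map_mul,
    (MulAut.conj g).injective.eq_iff]

theorem mem_normalizer_centralizer_of_centralizer_conj_eq {g y : G}
    (hC : centralizer {g * y * g⁻¹} = centralizer {y}) :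
    g ∈ normalizer (centralizer {y} : Set G) :=
  mem_normalizer_iff.mpr fun _ => conj_mem_centralizer_conj_iff.symm.trans (by rw [hC])

end

/-- A commutative transitive group in which centralizers of nontrivial elements
are self-normalizing is CSA: every maximal abelian subgroup is malnormal. -/
theorem csa_of_commTransitive_selfNormalizing
    (G : Type) [Group G]
    (hct : ∀ a b c : G, a * b = b * a → b * c = c * b → b ≠ 1 → a * c = c * a)
    (hsn : ∀ x : G, x ≠ 1 →
        Subgroup.normalizer (Subgroup.centralizer {x} : Set G) = Subgroup.centralizer {x}) :
    ∀ M : Subgroup G,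
      (∀ a ∈ M, ∀ b ∈ M, a * b = b * a) →
      (∀ N : Subgroup G, (∀ a ∈ N, ∀ b ∈ N, a * b = b * a) → M ≤ N → N = M) →
      ∀ g : G, (∃ y : G, y ≠ 1 ∧ y ∈ M ∧ g * y * g⁻¹ ∈ M) → g ∈ M := by
  intro M hM hmax g ⟨y, hy, hyM, hgyM⟩
  have hCy : centralizer {y} = M :=
    IsCommTransitive.centralizer_singleton_eq_of_maximal hct hM hmax hy hyM
  have hCgy : centralizer {g * y * g⁻¹} = M :=
    IsCommTransitive.centralizer_singleton_eq_of_maximal hct hM hmax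
      (conj_eq_one_iff.not.mpr hy) hgyM
  have hg := mem_normalizer_centralizer_of_centralizer_conj_eq (hCgy.trans hCy.symm)
  rwa [hsn y hy, hCy] at hg
end

section
/- Superstability from trivial tripod stabilizers and commuting segment stabilizers: let a group L act by isometries on a real tree T such that (a) any element fixing a nondegenerate tripod is trivial, and (b) any two elements fixing a common nondegenerate segment pointwise commute. Then the action is superstable: whenever J ⊆ I are nondegenerate segments with Fix(J) ≠ Fix(I) (pointwise stabilizers), Fix(I) is trivial. -/
/-- The geodesic segment between `a` and `b` in a real tree: the set of points
lying between them. -/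
def seg {T : Type*} [MetricSpace T] (a b : T) : Set T :=
  {z | dist a z + dist z b = dist a b}

/-- A real tree: a geodesic metric space satisfying the four-point condition
with constant `0`. -/
def IsRealTree (T : Type*) [MetricSpace T] : Prop :=
  (∀ x y : T, ∃ f : ℝ → T, f 0 = x ∧ f (dist x y) = y ∧
      ∀ s ∈ Set.Icc (0 : ℝ) (dist x y), ∀ t ∈ Set.Icc (0 : ℝ) (dist x y),
        dist (f s) (f t) = |s - t|) ∧
  (∀ x y z w : T,
      dist x z + dist y w ≤ max (dist x y + dist z w) (dist x w + dist y z))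

lemma seg_symm {T : Type*} [MetricSpace T] (a b : T) : seg a b = seg b a := by
  ext z
  simp only [seg, Set.mem_setOf_eq]
  rw [dist_comm a z, dist_comm z b, dist_comm a b]
  constructor <;> intro h <;> linarith

lemma left_mem_seg {T : Type*} [MetricSpace T] (a b : T) : a ∈ seg a b := by
  simp [seg]

lemma right_mem_seg {T : Type*} [MetricSpace T] (a b : T) : b ∈ seg a b := by
  simp [seg]

/-- In a real tree, the distance between two points of a segment is the
difference of their distances to an endpoint. -/
lemma seg_dist {T : Type*} [MetricSpace T] (hT : IsRealTree T) {a b p q : T}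
    (hp : p ∈ seg a b) (hq : q ∈ seg a b) :
    dist p q = |dist a p - dist a q| := by
  have hp' : dist a p + dist p b = dist a b := hp
  have hq' : dist a q + dist q b = dist a b := hq
  have h4 := hT.2 a p b q
  have hge := abs_dist_sub_le p q a
  rw [dist_comm p a, dist_comm q a] at hge
  refine le_antisymm ?_ hge
  rcases le_max_iff.mp h4 with h | h
  · have hbq : dist b q = dist q b := dist_comm b q
    have := le_abs_self (dist a p - dist a q)
    linarith
  · have hpb : dist p b = dist b p := dist_comm p b
    have := neg_abs_le (dist a p - dist a q)
    linarith

/-- An isometric group element fixing two points fixes the segment between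
them pointwise. -/
lemma fix_seg {T : Type*} [MetricSpace T] (hT : IsRealTree T)
    {L : Type*} [Group L] [MulAction L T]
    (hiso : ∀ g : L, Isometry (fun x : T => g • x)) (g : L) {p q : T}
    (hp : g • p = p) (hq : g • q = q) : ∀ z ∈ seg p q, g • z = z := by
  intro z hz
  have e1 : dist (g • p) (g • z) = dist p z := (hiso g).dist_eq p z
  have e2 : dist (g • z) (g • q) = dist z q := (hiso g).dist_eq z q
  rw [hp] at e1
  rw [hq] at e2
  have hz' : dist p z + dist z q = dist p q := hz
  have hmem : g • z ∈ seg p q := by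
    show dist p (g • z) + dist (g • z) q = dist p q
    rw [e1, e2]; exact hz'
  have := seg_dist hT hz hmem
  rw [e1, sub_self, abs_zero] at this
  exact (dist_eq_zero.mp this).symm

/-- The key collinearity computation: if `a` lies between `y` and `b`,
`x, p ∈ seg a b`, `y ≠ a`, and `p` is equidistant from `y` and `x`, then
`dist a x = 2 * dist a p + dist y a`. -/
lemma collinear_eq {T : Type*} [MetricSpace T] (hT : IsRealTree T) {a b x y p : T}
    (hx : x ∈ seg a b) (hp : p ∈ seg a b) (hd : dist p y = dist p x)
    (hcol : a ∈ seg y b) (hya : y ≠ a) :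
    dist a x = 2 * dist a p + dist y a := by
  have hyb : dist y a + dist a b = dist y b := hcol
  have hp' : dist a p + dist p b = dist a b := hp
  have h1 : dist p y = dist a p + dist y a := by
    have t1 : dist p y ≤ dist p a + dist a y := dist_triangle p a y
    have t2 : dist y b ≤ dist y p + dist p b := dist_triangle y p b
    have c1 : dist p a = dist a p := dist_comm p a
    have c2 : dist a y = dist y a := dist_comm a y
    have c3 : dist y p = dist p y := dist_comm y p
    linarith
  have h2 : dist p x = |dist a p - dist a x| := seg_dist hT hp hx
  have hr : 0 < dist y a := dist_pos.mpr hya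
  have ht : 0 ≤ dist a x := dist_nonneg
  rcases abs_cases (dist a p - dist a x) with ⟨he, _⟩ | ⟨he, _⟩ <;> rw [he] at h2 <;> linarith

/-- Superstability from trivial tripod stabilizers and commuting segment
stabilizers: if `L` acts by isometries on a real tree `T` so that (a) any
element fixing a nondegenerate tripod is trivial and (b) any two elements fixing
a common nondegenerate segment pointwise commute, then whenever `J ⊆ I` are
nondegenerate segments with `Fix(J) ≠ Fix(I)`, the stabilizer `Fix(I)` is
trivial. -/
theorem superstable_of_tripod_and_segment_stabilizers
    (T : Type) [MetricSpace T] (hT : IsRealTree T)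
    (L : Type) [Group L] [MulAction L T]
    (hiso : ∀ g : L, Isometry (fun x : T => g • x))
    (htripod : ∀ g : L, ∀ x y z : T,
        x ∉ seg y z → y ∉ seg x z → z ∉ seg x y →
        (∀ p ∈ seg x y ∪ seg y z ∪ seg x z, g • p = p) → g = 1)
    (hseg : ∀ g h : L, ∀ a b : T, a ≠ b →
        (∀ p ∈ seg a b, g • p = p) → (∀ p ∈ seg a b, h • p = p) →
        g * h = h * g) :
    ∀ a b a' b' : T, a ≠ b → a' ≠ b' → seg a' b' ⊆ seg a b →
      {g : L | ∀ p ∈ seg a' b', g • p = p} ≠ {g : L | ∀ p ∈ seg a b, g • p = p} →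
      ∀ g : L, (∀ p ∈ seg a b, g • p = p) → g = 1 := by
  intro a b a' b' hab ha'b' hJI hne g hgfix
  -- Fix(I) ⊆ Fix(J)
  have hsub : {g : L | ∀ p ∈ seg a b, g • p = p} ⊆
      {g : L | ∀ p ∈ seg a' b', g • p = p} := fun g hg p hp => hg p (hJI hp)
  -- get g₀ fixing J but not I
  obtain ⟨g₀, hg₀J, hg₀I⟩ : ∃ g₀ : L, g₀ ∈ {g : L | ∀ p ∈ seg a' b', g • p = p} ∧
      g₀ ∉ {g : L | ∀ p ∈ seg a b, g • p = p} := by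
    by_contra hc
    push_neg at hc
    exact hne (Set.Subset.antisymm hc hsub)
  simp only [Set.mem_setOf_eq] at hg₀J hg₀I
  push_neg at hg₀I
  obtain ⟨x, hxI, hgx⟩ := hg₀I
  set y := g₀ • x with hy_def
  -- endpoints of J are in I
  have ha'I : a' ∈ seg a b := hJI (left_mem_seg a' b')
  have hb'I : b' ∈ seg a b := hJI (right_mem_seg a' b')
  -- g₀ fixes a', b'
  have hg₀a' : g₀ • a' = a' := hg₀J a' (left_mem_seg a' b')
  have hg₀b' : g₀ • b' = b' := hg₀J b' (right_mem_seg a' b')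
  -- y is equidistant from a' and b' with x
  have dxa' : dist a' y = dist a' x := by
    have := (hiso g₀).dist_eq a' x
    rw [hg₀a'] at this
    exact this
  have dxb' : dist b' y = dist b' x := by
    have := (hiso g₀).dist_eq b' x
    rw [hg₀b'] at this
    exact this
  -- g commutes with g₀
  have hcomm : g₀ * g = g * g₀ :=
    hseg g₀ g a' b' ha'b' hg₀J (fun p hp => hgfix p (hJI hp))
  -- hence g fixes y
  have hgy : g • y = y := by
    rw [hy_def, smul_smul, ← hcomm, mul_smul, hgfix x hxI]
  have ha'b'dist : dist a' b' ≠ 0 := dist_ne_zero.mpr ha'b'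
  -- y is not on seg a b
  have hyI : y ∉ seg a b := by
    intro hyI
    have e1 : dist a' x = |dist a a' - dist a x| := seg_dist hT ha'I hxI
    have e2 : dist a' y = |dist a a' - dist a y| := seg_dist hT ha'I hyI
    have e3 : dist b' x = |dist a b' - dist a x| := seg_dist hT hb'I hxI
    have e4 : dist b' y = |dist a b' - dist a y| := seg_dist hT hb'I hyI
    have e5 : dist x y = |dist a x - dist a y| := seg_dist hT hxI hyI
    have e6 : dist a' b' = |dist a a' - dist a b'| := seg_dist hT ha'I hb'I
    set t := dist a x
    set s := dist a y
    set u := dist a a'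
    set v := dist a b'
    have q1 : (u - t) ^ 2 = (u - s) ^ 2 := by
      rw [← sq_abs (u - t), ← sq_abs (u - s), ← e1, ← e2, dxa']
    have q2 : (v - t) ^ 2 = (v - s) ^ 2 := by
      rw [← sq_abs (v - t), ← sq_abs (v - s), ← e3, ← e4, dxb']
    have key : (u - v) * (t - s) = 0 := by nlinarith [q1, q2]
    rcases mul_eq_zero.mp key with h0 | h0
    · exact ha'b'dist (by rw [e6]; rw [sub_eq_zero] at h0; rw [h0, sub_self, abs_zero])
    · apply hgx
      rw [sub_eq_zero] at h0
      have : dist x y = 0 := by rw [e5, h0, sub_self, abs_zero]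
      exact (dist_eq_zero.mp this).symm
  -- a is not between y and b
  have hA : a ∉ seg y b := by
    intro hA
    have hya : y ≠ a := fun h => hyI (h ▸ left_mem_seg a b)
    have c1 := collinear_eq hT hxI ha'I dxa' hA hya
    have c2 := collinear_eq hT hxI hb'I dxb' hA hya
    have e6 : dist a' b' = |dist a a' - dist a b'| := seg_dist hT ha'I hb'I
    apply ha'b'dist
    rw [e6]
    have : dist a a' = dist a b' := by linarith
    rw [this, sub_self, abs_zero]
  -- b is not between a and y
  have hB : b ∉ seg a y := by
    intro hB
    have hyb : y ≠ b := fun h => hyI (h ▸ right_mem_seg a b)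
    have hB' : b ∈ seg y a := by rw [← seg_symm]; exact hB
    have hxI' : x ∈ seg b a := by rw [← seg_symm]; exact hxI
    have ha'I' : a' ∈ seg b a := by rw [← seg_symm]; exact ha'I
    have hb'I' : b' ∈ seg b a := by rw [← seg_symm]; exact hb'I
    have c1 := collinear_eq hT hxI' ha'I' dxa' hB' hyb
    have c2 := collinear_eq hT hxI' hb'I' dxb' hB' hyb
    have e6 : dist a' b' = |dist b a' - dist b b'| := seg_dist hT ha'I' hb'I'
    apply ha'b'dist
    rw [e6]
    have : dist b a' = dist b b' := by linarith
    rw [this, sub_self, abs_zero]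
  -- now a, b, y form a tripod fixed by g
  have hga : g • a = a := hgfix a (left_mem_seg a b)
  have hgb : g • b = b := hgfix b (right_mem_seg a b)
  refine htripod g a b y ?_ hB hyI ?_
  · rw [seg_symm]; exact hA
  · intro p hp
    rcases hp with (hp | hp) | hp
    · exact hgfix p hp
    · exact fix_seg hT hiso g hgb hgy p hp
    · exact fix_seg hT hiso g hga hgy p hp
end
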